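/- A ring R is strongly 2-nil-clean (every element is the sum of a tripotent and a nilpotent that commute) if and only if every element of R has a Hirano inverse. -/

import Mathlib

/-!
If `b` is a Hirano inverse of `a`, then `ab` is idempotent and `a (1 - ab)` squares into the
nilpotent `(a² - ab)(1 - ab)`, so `a - a³` is nilpotent; for `a = 2` this makes `6` nilpotent.
Conversely, when `6` is nilpotent a Bézout identity between powers of `3` and `2` gives an
idempotent `f` with `3f` and `2(1 - f)` nilpotent. Modulo nilpotents `a` is then a root of
`f (X³ - X) + (1 - f) (X² - X)`, whose derivative at `a` is a unit, so Newton's method lifts it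
to an exact root, which is a tripotent. A tripotent-plus-nilpotent `p + w` has the Hirano
inverse `(1 + pw)⁻¹ p`. All computations take place in the commutative subring generated by
the commuting elements at hand.
-/

def IsHiranoInverse {R : Type*} [Ring R] (a b : R) : Prop :=
  IsNilpotent (a ^ 2 - a * b) ∧ a * b = b * a ∧ b = b * a * b

def IsStronglyTwoNilClean {R : Type*} [Ring R] (a : R) : Prop :=
  ∃ p w : R, p ^ 3 = p ∧ IsNilpotent w ∧ p * w = w * p ∧ a = p + w

section CommRing

variable {A : Type*} [CommRing A]

theorem exists_isIdempotentElem_isNilpotent_mul_of_isCoprime {m n : A} (hmn : IsCoprime m n)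
    (h : IsNilpotent (m * n)) :
    ∃ f : A, IsIdempotentElem f ∧ IsNilpotent (m * f) ∧ IsNilpotent (n * (1 - f)) := by
  obtain ⟨k, hk⟩ := h
  obtain ⟨u, v, huv⟩ := hmn.pow (m := k) (n := k)
  have hf : IsIdempotentElem (v * n ^ k) := by
    unfold IsIdempotentElem
    linear_combination (v * n ^ k) * huv - u * v * hk
  refine ⟨v * n ^ k, hf, ⟨k + 1, ?_⟩, ⟨k + 1, ?_⟩⟩
  · rw [mul_pow, hf.pow_succ_eq, pow_succ']
    linear_combination m * v * hk
  · have h1f : 1 - v * n ^ k = u * m ^ k := by linear_combination -huv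
    rw [mul_pow, hf.one_sub.pow_succ_eq, pow_succ', h1f]
    linear_combination n * u * hk

open Polynomial in
theorem exists_pow_three_eq_self_isNilpotent_sub (h6 : IsNilpotent (6 : A)) {a : A}
    (ha : IsNilpotent (a - a ^ 3)) : ∃ p : A, p ^ 3 = p ∧ IsNilpotent (a - p) := by
  obtain ⟨f, hf, h3f, h2f⟩ := exists_isIdempotentElem_isNilpotent_mul_of_isCoprime
    (show IsCoprime (3 : A) 2 from ⟨1, -1, by norm_num⟩) (by norm_num [h6])
  have hPa : IsNilpotent (f * (a ^ 3 - a) + (1 - f) * (a ^ 2 - a)) := by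
    have h3 : IsNilpotent (f * (a ^ 3 - a)) := by
      rw [← neg_sub a, mul_neg]
      exact ((Commute.all _ _).isNilpotent_mul_left ha).neg
    have h2 : IsNilpotent ((1 - f) * (a ^ 2 - a)) := by
      refine IsNilpotent.of_pow (m := 2) ?_
      have hsq : ((1 - f) * (a ^ 2 - a)) ^ 2 =
          -((1 - f) * a * (a - a ^ 3)) + 2 * (1 - f) * (a ^ 2 * (1 - a)) := by
        linear_combination (a ^ 2 - a) ^ 2 * hf.eq
      rw [hsq]
      exact (Commute.all _ _).isNilpotent_add
        ((Commute.all _ _).isNilpotent_mul_left ha).neg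
        ((Commute.all _ _).isNilpotent_mul_right h2f)
    exact (Commute.all _ _).isNilpotent_add h3 h2
  have hP'a : IsUnit (f * (3 * a ^ 2 - 1) + (1 - f) * (2 * a - 1)) := by
    have hn : IsNilpotent (3 * f * a ^ 2 + 2 * (1 - f) * a) :=
      (Commute.all _ _).isNilpotent_add ((Commute.all _ _).isNilpotent_mul_right h3f)
        ((Commute.all _ _).isNilpotent_mul_right h2f)
    convert hn.isUnit_sub_one using 1
    ring
  -- the roots of `f (X³ - X) + (1 - f) (X² - X)` are tripotents, and Newton's method applies
  obtain ⟨r, ⟨hr, hPr⟩, -⟩ := existsUnique_nilpotent_sub_and_aeval_eq_zero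
    (x := a) (P := C f * (X ^ 3 - X) + (1 - C f) * (X ^ 2 - X)) (by simpa using hPa)
    (by simpa [mul_sub, two_add_one_eq_three, one_add_one_eq_two] using hP'a)
  refine ⟨r, ?_, hr⟩
  simp only [coe_aeval_eq_eval, eval_add, eval_mul, eval_C, eval_sub, eval_pow, eval_X,
    eval_one] at hPr
  linear_combination (f + (1 - f) * (r + 1)) * hPr + (r ^ 4 - r ^ 3) * hf.eq

theorem isNilpotent_sub_pow_three_of_isHiranoInverse {a b : A} (h : IsHiranoInverse a b) :
    IsNilpotent (a - a ^ 3) := by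
  obtain ⟨hnil, -, hbab⟩ := h
  have hab : IsIdempotentElem (a * b) := by
    unfold IsIdempotentElem
    linear_combination -a * hbab
  have hsq : (a * (1 - a * b)) ^ 2 = (a ^ 2 - a * b) * (1 - a * b) := by
    linear_combination (a ^ 2 - 1) * hab.eq
  have h1 : IsNilpotent (a * (1 - a * b)) :=
    IsNilpotent.of_pow (m := 2) (hsq ▸ (Commute.all _ _).isNilpotent_mul_right hnil)
  rw [show a - a ^ 3 = a * (1 - a * b) + (a ^ 2 - a * b) * (-a) by ring]
  exact (Commute.all _ _).isNilpotent_add h1 ((Commute.all _ _).isNilpotent_mul_right hnil)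

theorem exists_isHiranoInverse_add {p w : A} (hp : p ^ 3 = p) (hw : IsNilpotent w) :
    ∃ b, IsHiranoInverse (p + w) b := by
  obtain ⟨s, hs⟩ := ((Commute.all p w).isNilpotent_mul_left hw).isUnit_one_add.exists_right_inv
  -- `b = (1 + p w)⁻¹ p`, chosen so that `(p + w) b = p²`
  have hab : (p + w) * (s * p) = p ^ 2 := by
    linear_combination (-(w * s)) * hp + p ^ 2 * hs
  refine ⟨s * p, ?_, mul_comm _ _, ?_⟩
  · rw [hab, show (p + w) ^ 2 - p ^ 2 = w * (2 * p + w) by ring]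
    exact (Commute.all _ _).isNilpotent_mul_right hw
  · rw [mul_assoc, hab]
    linear_combination -s * hp

end CommRing

section Ring

variable {R S : Type*} [Ring R] [Ring S]

open scoped IsMulCommutative

theorem IsHiranoInverse.map {a b : R} (h : IsHiranoInverse a b) (f : R →+* S) :
    IsHiranoInverse (f a) (f b) := by
  obtain ⟨hnil, hab, hbab⟩ := h
  exact ⟨by simpa using hnil.map f, by simpa using congrArg f hab,
    by simpa using congrArg f hbab⟩

theorem IsHiranoInverse.of_map {f : R →+* S} (hf : Function.Injective f) {a b : R}
    (h : IsHiranoInverse (f a) (f b)) : IsHiranoInverse a b := by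
  obtain ⟨hnil, hab, hbab⟩ := h
  exact ⟨(IsNilpotent.map_iff hf).1 (by simpa using hnil), hf (by simpa using hab),
    hf (by simpa using hbab)⟩

theorem IsStronglyTwoNilClean.map {a : R} (h : IsStronglyTwoNilClean a) (f : R →+* S) :
    IsStronglyTwoNilClean (f a) := by
  obtain ⟨p, w, hp, hw, hpw, rfl⟩ := h
  exact ⟨f p, f w, by rw [← map_pow, hp], hw.map f, by simp only [← map_mul, hpw],
    map_add f p w⟩

theorem Commute.isMulCommutative_closure_pair {x y : R} (h : Commute x y) :
    IsMulCommutative (Subring.closure {x, y}) :=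
  Subring.isMulCommutative_closure <| by
    simp only [Set.mem_insert_iff, Set.mem_singleton_iff]
    rintro a (rfl | rfl) b (rfl | rfl)
    exacts [rfl, h.eq, h.symm.eq, rfl]

theorem IsHiranoInverse.isNilpotent_sub_pow_three {a b : R} (h : IsHiranoInverse a b) :
    IsNilpotent (a - a ^ 3) := by
  have := Commute.isMulCommutative_closure_pair h.2.1
  let T := Subring.closure {a, b}
  let a' : T := ⟨a, Subring.subset_closure (by simp)⟩
  let b' : T := ⟨b, Subring.subset_closure (by simp)⟩
  have h' : IsHiranoInverse a' b' :=
    IsHiranoInverse.of_map (f := T.subtype) Subtype.val_injective h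
  simpa using (isNilpotent_sub_pow_three_of_isHiranoInverse h').map T.subtype

theorem IsStronglyTwoNilClean.exists_isHiranoInverse {a : R} (h : IsStronglyTwoNilClean a) :
    ∃ b, IsHiranoInverse a b := by
  obtain ⟨p, w, hp, hw, hpw, rfl⟩ := h
  have := Commute.isMulCommutative_closure_pair hpw
  let T := Subring.closure {p, w}
  let p' : T := ⟨p, Subring.subset_closure (by simp)⟩
  let w' : T := ⟨w, Subring.subset_closure (by simp)⟩
  obtain ⟨b, hb⟩ := exists_isHiranoInverse_add (p := p') (w := w')
    (Subtype.ext (by simpa using hp))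
    ((IsNilpotent.map_iff (f := T.subtype) Subtype.val_injective).1 hw)
  exact ⟨b, by simpa using hb.map T.subtype⟩

theorem isStronglyTwoNilClean_of_isNilpotent_sub_pow_three (h6 : IsNilpotent (6 : R)) {a : R}
    (ha : IsNilpotent (a - a ^ 3)) : IsStronglyTwoNilClean a := by
  have := (Commute.refl a).isMulCommutative_closure_pair
  let T := Subring.closure {a, a}
  let a' : T := ⟨a, Subring.subset_closure (by simp)⟩
  have hT : Function.Injective T.subtype := Subtype.val_injective
  obtain ⟨p, hp, hap⟩ := exists_pow_three_eq_self_isNilpotent_sub (a := a')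
    ((IsNilpotent.map_iff hT).1 (by exact_mod_cast h6)) ((IsNilpotent.map_iff hT).1 ha)
  exact IsStronglyTwoNilClean.map (a := a') ⟨p, a' - p, hp, hap, mul_comm _ _, by ring⟩
    T.subtype

end Ring

theorem stmt10 {R : Type*} [Ring R] :
    (∀ a : R, ∃ p w : R, p ^ 3 = p ∧ IsNilpotent w ∧ p * w = w * p ∧ a = p + w) ↔
    (∀ a : R, ∃ b, IsHiranoInverse a b) := by
  refine ⟨fun h a => IsStronglyTwoNilClean.exists_isHiranoInverse (h a), fun h a => ?_⟩
  have h6 : IsNilpotent (6 : R) := by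
    obtain ⟨b, hb⟩ := h 2
    simpa [show (2 : R) - 2 ^ 3 = -6 by norm_num] using hb.isNilpotent_sub_pow_three
  obtain ⟨b, hb⟩ := h a
  exact isStronglyTwoNilClean_of_isNilpotent_sub_pow_three h6 hb.isNilpotent_sub_pow_three
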